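/- Let d ≥ 5 and β_d = 1/I(0). Then the function ψ : ℤ^d → ℝ defined by ψ(x) = β_d (2π)^{−d} ∫_{[−π,π]^d} cos⟨φ,x⟩/Φ(φ) dφ belongs to ℓ²(ℤ^d), satisfies ψ(0) = 1, and is an eigenfunction of H_{β_d} with eigenvalue 0: H_{β_d} ψ = 0. In other words, for d ≥ 5 the critical operator H_{β_d} has 0 as an ℓ²-eigenvalue at the edge of its essential spectrum. -/

import Mathlib

/-! Up to the factor `β_d (2π)^{-d}`, `ψ` is the cosine transform of `Φ⁻¹` over the cube. On the
cube `Φ(φ) ≥ (4/π²) max_j φ_j² ≥ (4/π²) ∏_j |φ_j|^{2/d}`, so `Φ^{-p}` is dominated by a product of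
one-dimensional singularities `|φ_j|^{-2p/d}`, integrable as soon as `2p < d`. Hence `Φ⁻¹` is
integrable for `d ≥ 3` and square integrable for `d ≥ 5`, and Bessel's inequality for the plane
waves `e^{i⟨φ,z⟩}` makes its Fourier coefficients square summable. The lattice Laplacian acts on
the Fourier side as multiplication by `-Φ`, so
`Δψ(x) = -β_d (2π)^{-d} ∫ cos⟨φ,x⟩ dφ = -β_d 1_{x=0}`, which the potential cancels because
`ψ(0) = β_d I(0) = 1`. -/

open MeasureTheory Real Filter
open scoped ENNReal

noncomputable section

/-- The Fourier symbol `Φ(φ) = 2 ∑_j (1 - cos φ_j)` of the negative discrete Laplacian on `ℤ^d`. -/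
def Phi (d : ℕ) (φ : Fin d → ℝ) : ℝ := 2 * ∑ j, (1 - Real.cos (φ j))

/-- The cube `[-π, π]^d`. -/
def cube (d : ℕ) : Set (Fin d → ℝ) := Set.univ.pi fun _ => Set.Icc (-π) π

/-- `I(λ) = (2π)^{-d} ∫_{[-π,π]^d} (λ + Φ(φ))⁻¹ dφ` (Bochner integral, real-valued). -/
def Ir (d : ℕ) (lam : ℝ) : ℝ := ((2 * π) ^ d)⁻¹ * ∫ φ in cube d, (lam + Phi d φ)⁻¹

/-- The lattice `ℤ^d`. -/
abbrev Zd (d : ℕ) := Fin d → ℤ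

/-- The Hilbert space `ℓ²(ℤ^d)` of real square-summable sequences. -/
abbrev l2 (d : ℕ) := lp (fun _ : Zd d => ℝ) 2

/-- The indicator `δ_x ∈ ℓ²(ℤ^d)` of the point `x`. -/
def delta (d : ℕ) (x : Zd d) : l2 d := lp.single 2 x 1

/-- The pointwise action of `H_β = Δ + β δ₀`:
`(H_β f)(x) = ∑_{y : |y-x|=1} (f y - f x) + β·1_{x=0}·f x`, where the sum over the `2d`
nearest neighbours is written out explicitly. -/
def Hform (d : ℕ) (β : ℝ) (f : Zd d → ℝ) (x : Zd d) : ℝ :=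
  (∑ i : Fin d, (f (Function.update x i (x i + 1)) + f (Function.update x i (x i - 1))))
    - 2 * d * f x + β * (if x = 0 then f x else 0)

/-- `H` is the bounded operator `H_β` on `ℓ²(ℤ^d)`. -/
def IsHamiltonian (d : ℕ) (β : ℝ) (H : l2 d →L[ℝ] l2 d) : Prop :=
  ∀ (f : l2 d) (x : Zd d), H f x = Hform d β (⇑f) x

/-- Heat kernel `p_β(t,x,y) = ⟨exp(t H_β) δ_y, δ_x⟩`. -/
def heatKernel (d : ℕ) (H : l2 d →L[ℝ] l2 d) (t : ℝ) (x y : Zd d) : ℝ :=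
  inner ℝ (NormedSpace.exp (t • H) (delta d y)) (delta d x)

/-- The candidate eigenfunction: `ψ(x) = β (2π)^{-d} ∫_{[-π,π]^d} cos⟨φ,x⟩/(λ₀ + Φ(φ)) dφ`. -/
def psiFun (d : ℕ) (β lam0 : ℝ) (x : Zd d) : ℝ :=
  β * (((2 * π) ^ d)⁻¹ *
    ∫ φ in cube d, Real.cos (∑ i, φ i * (x i : ℝ)) / (lam0 + Phi d φ))

open Set
open scoped ComplexConjugate InnerProductSpace

lemma measurableSet_cube (d : ℕ) : MeasurableSet (cube d) :=
  .univ_pi fun _ => measurableSet_Icc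

lemma volume_restrict_cube (d : ℕ) :
    volume.restrict (cube d) = Measure.pi fun _ : Fin d => volume.restrict (Icc (-π) π) := by
  rw [cube, volume_pi, Measure.restrict_pi_pi]

lemma measureReal_cube (d : ℕ) : volume.real (cube d) = (2 * π) ^ d := by
  rw [cube, pi_univ_Icc, measureReal_def,
    Real.volume_Icc_pi_toReal fun _ => by linarith [pi_pos]]
  simp [two_mul]

instance (d : ℕ) : IsFiniteMeasure (volume.restrict (cube d)) :=
  isFiniteMeasure_restrict.2 (isCompact_univ_pi fun _ => isCompact_Icc).measure_lt_top.ne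

lemma ae_forall_ne_zero (d : ℕ) : ∀ᵐ φ : Fin d → ℝ, ∀ j, φ j ≠ 0 := by
  rw [ae_all_iff, volume_pi]
  exact fun j => Measure.ae_eval_ne _ j 0

lemma continuous_Phi (d : ℕ) : Continuous (Phi d) := by
  unfold Phi
  fun_prop

lemma Phi_eq_sub_sum_cos (d : ℕ) (φ : Fin d → ℝ) : Phi d φ = 2 * d - 2 * ∑ j, cos (φ j) := by
  simp [Phi, Finset.sum_sub_distrib, mul_sub]

lemma Phi_le (d : ℕ) (φ : Fin d → ℝ) : Phi d φ ≤ 4 * d := by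
  have : ∀ j, -1 ≤ cos (φ j) := fun j => neg_one_le_cos _
  have := Finset.sum_le_sum fun j (_ : j ∈ Finset.univ) => this j
  simp only [Finset.sum_const, Finset.card_univ, Fintype.card_fin, nsmul_eq_mul] at this
  rw [Phi_eq_sub_sum_cos]
  linarith

lemma Phi_nonneg (d : ℕ) (φ : Fin d → ℝ) : 0 ≤ Phi d φ :=
  mul_nonneg zero_le_two (Finset.sum_nonneg fun j _ => sub_nonneg.2 (cos_le_one (φ j)))

lemma two_mul_one_sub_cos_le_Phi {d : ℕ} (φ : Fin d → ℝ) (j : Fin d) :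
    2 * (1 - cos (φ j)) ≤ Phi d φ :=
  mul_le_mul_of_nonneg_left
    (Finset.single_le_sum (fun i _ => sub_nonneg.2 (cos_le_one (φ i))) (Finset.mem_univ j))
    zero_le_two

lemma sq_le_Phi {d : ℕ} {φ : Fin d → ℝ} (hφ : φ ∈ cube d) (j : Fin d) :
    4 / π ^ 2 * φ j ^ 2 ≤ Phi d φ := by
  have hcos := cos_le_one_sub_mul_cos_sq (abs_le.2 (hφ j (mem_univ j)))
  have h := two_mul_one_sub_cos_le_Phi φ j
  linarith [show 4 / π ^ 2 * φ j ^ 2 = 2 * (2 / π ^ 2 * φ j ^ 2) by ring]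

lemma ae_restrict_cube_Phi_pos {d : ℕ} (hd : 0 < d) :
    ∀ᵐ φ ∂volume.restrict (cube d), 0 < Phi d φ := by
  filter_upwards [ae_restrict_mem (measurableSet_cube d),
    ae_restrict_of_ae (ae_forall_ne_zero d)] with φ hφ hne
  have h0 : 0 < φ ⟨0, hd⟩ ^ 2 := by have := hne ⟨0, hd⟩; positivity
  exact lt_of_lt_of_le (by positivity) (sq_le_Phi hφ ⟨0, hd⟩)

lemma prod_abs_rpow_le_sq {d : ℕ} {φ : Fin d → ℝ} {k : Fin d} (hk : ∀ j, |φ j| ≤ |φ k|) :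
    ∏ j, |φ j| ^ (2 / d : ℝ) ≤ φ k ^ 2 := by
  have hd : (d : ℝ) ≠ 0 := Nat.cast_ne_zero.2 (Fin.pos k).ne'
  calc ∏ j, |φ j| ^ (2 / d : ℝ) ≤ ∏ _j : Fin d, |φ k| ^ (2 / d : ℝ) :=
        Finset.prod_le_prod (fun _ _ => by positivity)
          fun j _ => rpow_le_rpow (abs_nonneg _) (hk j) (by positivity)
    _ = φ k ^ 2 := by
        rw [Finset.prod_const, Finset.card_univ, Fintype.card_fin, ← rpow_mul_natCast
          (abs_nonneg _), div_mul_cancel₀ _ hd, rpow_two, sq_abs]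

lemma inv_Phi_le_prod {d : ℕ} (hd : 0 < d) {φ : Fin d → ℝ} (hφ : φ ∈ cube d)
    (hne : ∀ j, φ j ≠ 0) :
    (Phi d φ)⁻¹ ≤ π ^ 2 / 4 * ∏ j, |φ j| ^ (-(2 / d : ℝ)) := by
  have : Nonempty (Fin d) := ⟨⟨0, hd⟩⟩
  obtain ⟨k, hk⟩ := Finite.exists_max fun j => |φ j|
  have hP : 0 < ∏ j, |φ j| ^ (2 / d : ℝ) :=
    Finset.prod_pos fun j _ => rpow_pos_of_pos (abs_pos.2 (hne j)) _
  have hle : 4 / π ^ 2 * ∏ j, |φ j| ^ (2 / d : ℝ) ≤ Phi d φ :=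
    (mul_le_mul_of_nonneg_left (prod_abs_rpow_le_sq hk) (by positivity)).trans (sq_le_Phi hφ k)
  calc (Phi d φ)⁻¹ ≤ (4 / π ^ 2 * ∏ j, |φ j| ^ (2 / d : ℝ))⁻¹ := inv_anti₀ (by positivity) hle
    _ = π ^ 2 / 4 * ∏ j, |φ j| ^ (-(2 / d : ℝ)) := by
        simp only [mul_inv, inv_div, ← Finset.prod_inv_distrib, rpow_neg (abs_nonneg _)]

lemma intervalIntegrable_abs_rpow {a : ℝ} (ha : -1 < a) (b c : ℝ) :
    IntervalIntegrable (fun t : ℝ => |t| ^ a) volume b c := by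
  have hpos : ∀ c, 0 ≤ c → IntervalIntegrable (fun t : ℝ => |t| ^ a) volume 0 c := fun c hc =>
    (intervalIntegral.intervalIntegrable_rpow' ha).congr fun t ht => by
      rw [uIoc_of_le hc] at ht
      simp [abs_of_pos ht.1]
  have hzero : ∀ c, IntervalIntegrable (fun t : ℝ => |t| ^ a) volume 0 c := by
    intro c
    rcases le_total 0 c with hc | hc
    · exact hpos c hc
    · rw [IntervalIntegrable.iff_comp_neg]
      simpa using hpos (-c) (by linarith)
  exact (hzero b).symm.trans (hzero c)

lemma integrableOn_inv_Phi_pow {d p : ℕ} (h : 2 * p < d) :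
    IntegrableOn (fun φ => (Phi d φ)⁻¹ ^ p) (cube d) := by
  have hd : (0 : ℝ) < d := by exact_mod_cast (Nat.zero_le _).trans_lt h
  have ha : -1 < -(2 / d : ℝ) * p := by
    rw [neg_mul, neg_lt_neg_iff, div_mul_eq_mul_div, div_lt_one hd]
    exact_mod_cast h
  have hdom : Integrable (fun φ : Fin d → ℝ => (π ^ 2 / 4) ^ p * ∏ j, |φ j| ^ (-(2 / d : ℝ) * p))
      (volume.restrict (cube d)) := by
    rw [volume_restrict_cube]
    exact (Integrable.fintype_prod fun _ => (intervalIntegrable_iff_integrableOn_Icc_of_le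
      (by linarith [pi_pos])).1 (intervalIntegrable_abs_rpow ha _ _)).const_mul _
  refine hdom.mono ((continuous_Phi d).measurable.inv.pow_const p).aestronglyMeasurable ?_
  filter_upwards [ae_restrict_mem (measurableSet_cube d),
    ae_restrict_of_ae (ae_forall_ne_zero d)] with φ hφ hne
  have hΦ := Phi_nonneg d φ
  rw [norm_of_nonneg (by positivity), norm_of_nonneg (by positivity)]
  calc (Phi d φ)⁻¹ ^ p ≤ (π ^ 2 / 4 * ∏ j, |φ j| ^ (-(2 / d : ℝ))) ^ p :=
        pow_le_pow_left₀ (inv_nonneg.2 hΦ) (inv_Phi_le_prod (by exact_mod_cast hd) hφ hne) p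
    _ = (π ^ 2 / 4) ^ p * ∏ j, |φ j| ^ (-(2 / d : ℝ) * p) := by
        simp only [mul_pow, ← Finset.prod_pow, rpow_mul_natCast (abs_nonneg _)]

lemma integrableOn_inv_Phi {d : ℕ} (hd : 3 ≤ d) :
    IntegrableOn (fun φ => (Phi d φ)⁻¹) (cube d) := by
  simpa using integrableOn_inv_Phi_pow (d := d) (p := 1) (by omega)

lemma memLp_inv_Phi {d : ℕ} (hd : 5 ≤ d) :
    MemLp (fun φ => (Phi d φ)⁻¹) 2 (volume.restrict (cube d)) :=
  (memLp_two_iff_integrable_sq (continuous_Phi d).measurable.inv.aestronglyMeasurable).2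
    (integrableOn_inv_Phi_pow (p := 2) (by omega))

lemma integral_inv_Phi_pos {d : ℕ} (hd : 3 ≤ d) : 0 < ∫ φ in cube d, (Phi d φ)⁻¹ := by
  calc 0 < ∫ _ in cube d, (4 * d : ℝ)⁻¹ := by
        rw [setIntegral_const, measureReal_cube, smul_eq_mul]
        have : (0 : ℝ) < d := by exact_mod_cast (show 0 < d by omega)
        positivity
    _ ≤ ∫ φ in cube d, (Phi d φ)⁻¹ := by
        refine integral_mono_ae (integrable_const _) (integrableOn_inv_Phi hd) ?_
        filter_upwards [ae_restrict_cube_Phi_pos (show 0 < d by omega)] with φ hφ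
        exact inv_anti₀ hφ (Phi_le d φ)

lemma Ir_zero_pos {d : ℕ} (hd : 3 ≤ d) : 0 < Ir d 0 := by
  have := integral_inv_Phi_pos hd
  simp only [Ir, zero_add]
  positivity

def phase {d : ℕ} (z : Zd d) (φ : Fin d → ℝ) : ℝ := ∑ i, φ i * (z i : ℝ)

lemma continuous_phase {d : ℕ} (z : Zd d) : Continuous (phase z) := by
  unfold phase
  fun_prop

lemma phase_sub {d : ℕ} (z w : Zd d) (φ : Fin d → ℝ) :
    phase (z - w) φ = phase z φ - phase w φ := by
  simp [phase, mul_sub, Finset.sum_sub_distrib]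

lemma phase_update {d : ℕ} (x : Zd d) (i : Fin d) (v : ℤ) (φ : Fin d → ℝ) :
    phase (Function.update x i v) φ = phase x φ + φ i * (v - x i) := by
  simp only [phase, ← Finset.sum_erase_add _ _ (Finset.mem_univ i), Function.update_self]
  rw [Finset.sum_congr rfl fun j hj => by rw [Function.update_of_ne (Finset.ne_of_mem_erase hj)]]
  ring

def planeWave {d : ℕ} (z : Zd d) (φ : Fin d → ℝ) : ℂ := Complex.exp (phase z φ * Complex.I)

lemma continuous_planeWave {d : ℕ} (z : Zd d) : Continuous (planeWave z) := by
  unfold planeWave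
  have := continuous_phase z
  fun_prop

lemma norm_planeWave {d : ℕ} (z : Zd d) (φ : Fin d → ℝ) : ‖planeWave z φ‖ = 1 :=
  Complex.norm_exp_ofReal_mul_I _

lemma conj_planeWave_mul {d : ℕ} (z w : Zd d) (φ : Fin d → ℝ) :
    conj (planeWave z φ) * planeWave w φ = planeWave (w - z) φ := by
  simp only [planeWave, ← Complex.exp_conj, ← Complex.exp_add, map_mul, Complex.conj_ofReal,
    Complex.conj_I, phase_sub]
  push_cast
  ring_nf

lemma integral_exp_int_mul_I (n : ℤ) :
    ∫ t in Icc (-π) π, Complex.exp (t * n * Complex.I) = if n = 0 then (2 * π : ℂ) else 0 := by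
  rw [integral_Icc_eq_integral_Ioc, ← intervalIntegral.integral_of_le (by linarith [pi_pos])]
  split_ifs with hn
  · simp [hn, two_mul]
  · have hc : (n * Complex.I : ℂ) ≠ 0 := by simp [hn]
    simp_rw [show ∀ t : ℝ, (t : ℂ) * n * Complex.I = n * Complex.I * t from fun t => by ring]
    rw [integral_exp_mul_complex hc, div_eq_zero_iff, sub_eq_zero]
    exact .inl (Complex.exp_eq_exp_iff_exists_int.2 ⟨n, by push_cast; ring⟩)

lemma integral_planeWave {d : ℕ} (z : Zd d) :
    ∫ φ in cube d, planeWave z φ = if z = 0 then ((2 * π) ^ d : ℂ) else 0 := by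
  have hprod : ∀ φ : Fin d → ℝ,
      planeWave z φ = ∏ j, Complex.exp (φ j * (z j : ℤ) * Complex.I) := by
    intro φ
    simp only [planeWave, phase, ← Complex.exp_sum, Complex.ofReal_sum, Finset.sum_mul]
    push_cast
    rfl
  simp_rw [hprod]
  rw [volume_restrict_cube, integral_fintype_prod_eq_prod
    (f := fun j (t : ℝ) => Complex.exp (t * (z j : ℤ) * Complex.I))]
  simp [integral_exp_int_mul_I, Finset.prod_ite_zero, funext_iff]

lemma memLp_planeWave {d : ℕ} (z : Zd d) : MemLp (planeWave z) 2 (volume.restrict (cube d)) :=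
  .of_bound (continuous_planeWave z).aestronglyMeasurable 1
    (.of_forall fun φ => (norm_planeWave z φ).le)

lemma inner_toLp_eq_integral {α 𝕜 : Type*} [MeasurableSpace α] {μ : Measure α} [RCLike 𝕜]
    {f g : α → 𝕜} (hf : MemLp f 2 μ) (hg : MemLp g 2 μ) :
    ⟪hf.toLp f, hg.toLp g⟫_𝕜 = ∫ x, conj (f x) * g x ∂μ := by
  rw [L2.inner_def]
  refine integral_congr_ae ?_
  filter_upwards [hf.coeFn_toLp, hg.coeFn_toLp] with x hfx hgx
  rw [hfx, hgx, RCLike.inner_apply']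

def planeWaveLp {d : ℕ} (z : Zd d) : Lp ℂ 2 (volume.restrict (cube d)) :=
  ((√((2 * π) ^ d))⁻¹ : ℂ) • (memLp_planeWave z).toLp (planeWave z)

lemma orthonormal_planeWaveLp (d : ℕ) : Orthonormal ℂ (planeWaveLp (d := d)) := by
  rw [orthonormal_iff_ite]
  intro z w
  simp only [planeWaveLp, inner_smul_left, inner_smul_right, inner_toLp_eq_integral,
    conj_planeWave_mul, integral_planeWave, sub_eq_zero, eq_comm (a := w)]
  split_ifs
  · have hs : √((2 * π) ^ d) ^ 2 = (2 * π) ^ d := sq_sqrt (by positivity)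
    have : √((2 * π) ^ d) ≠ 0 := by positivity
    have h1 : (√((2 * π) ^ d))⁻¹ * ((√((2 * π) ^ d))⁻¹ * (2 * π) ^ d) = 1 := by
      field_simp
      exact hs.symm
    rw [← Complex.ofReal_inv, Complex.conj_ofReal]
    exact_mod_cast h1
  · simp

def cosTransform {d : ℕ} (g : (Fin d → ℝ) → ℝ) (z : Zd d) : ℝ :=
  ∫ φ in cube d, cos (phase z φ) * g φ

lemma re_inner_planeWaveLp {d : ℕ} {g : (Fin d → ℝ) → ℝ}
    (hg : MemLp g 2 (volume.restrict (cube d))) (z : Zd d) :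
    (⟪planeWaveLp z, hg.ofReal.toLp (fun φ => (g φ : ℂ))⟫_ℂ).re
      = (√((2 * π) ^ d))⁻¹ * cosTransform g z := by
  have hint : Integrable (fun φ => conj (planeWave z φ) * (g φ : ℂ)) (volume.restrict (cube d)) :=
    (hg.ofReal.integrable one_le_two).bdd_mul
      (continuous_planeWave z).star.aestronglyMeasurable
      (.of_forall fun φ => (by rw [RCLike.norm_conj, norm_planeWave]))
  rw [planeWaveLp, inner_smul_left, inner_toLp_eq_integral, ← Complex.ofReal_inv,
    Complex.conj_ofReal, Complex.re_ofReal_mul, ← RCLike.re_to_complex, ← integral_re hint,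
    cosTransform]
  congr 1
  refine integral_congr_ae (.of_forall fun φ => ?_)
  simp [planeWave, Complex.exp_ofReal_mul_I_re]

/-- Bessel's inequality for the plane waves. -/
lemma summable_sq_cosTransform {d : ℕ} {g : (Fin d → ℝ) → ℝ}
    (hg : MemLp g 2 (volume.restrict (cube d))) :
    Summable fun z : Zd d => cosTransform g z ^ 2 := by
  set G := hg.ofReal.toLp (fun φ => (g φ : ℂ))
  refine .of_nonneg_of_le (fun _ => sq_nonneg _) (fun z => ?_)
    (((orthonormal_planeWaveLp d).inner_products_summable (x := G)).mul_left ((2 * π) ^ d))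
  have hs : √((2 * π) ^ d) ^ 2 = (2 * π) ^ d := sq_sqrt (by positivity)
  have : √((2 * π) ^ d) ≠ 0 := by positivity
  calc cosTransform g z ^ 2 = √((2 * π) ^ d) ^ 2 * ((√((2 * π) ^ d))⁻¹ * cosTransform g z) ^ 2 := by
        field_simp
    _ = (2 * π) ^ d * (⟪planeWaveLp z, G⟫_ℂ).re ^ 2 := by rw [re_inner_planeWaveLp hg, hs]
    _ ≤ (2 * π) ^ d * ‖⟪planeWaveLp z, G⟫_ℂ‖ ^ 2 :=
        mul_le_mul_of_nonneg_left
          (sq_le_sq.2 ((Complex.abs_re_le_norm _).trans (le_abs_self _))) (by positivity)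

lemma cosTransform_one {d : ℕ} (z : Zd d) :
    cosTransform (fun _ => 1) z = if z = 0 then (2 * π) ^ d else 0 := by
  have hre := congrArg Complex.re (integral_planeWave z)
  rw [← RCLike.re_to_complex, ← integral_re ((memLp_planeWave z).integrable one_le_two)] at hre
  simp only [cosTransform, mul_one]
  convert hre using 1
  · simp [planeWave, Complex.exp_ofReal_mul_I_re]
  · split_ifs <;> norm_cast

lemma cosTransform_zero {d : ℕ} (g : (Fin d → ℝ) → ℝ) : cosTransform g 0 = ∫ φ in cube d, g φ := by
  simp [cosTransform, phase]

lemma psiFun_eq_cosTransform (d : ℕ) (β lam0 : ℝ) :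
    psiFun d β lam0 =
      fun x => β * ((2 * π) ^ d)⁻¹ * cosTransform (fun φ => (lam0 + Phi d φ)⁻¹) x := by
  ext x
  simp only [psiFun, cosTransform, phase, div_eq_mul_inv, mul_assoc]

lemma psiFun_apply_zero (d : ℕ) (β lam0 : ℝ) : psiFun d β lam0 0 = β * Ir d lam0 := by
  rw [psiFun_eq_cosTransform]
  dsimp only
  rw [cosTransform_zero, Ir, mul_assoc]

def latticeLaplacian (d : ℕ) (f : Zd d → ℝ) (x : Zd d) : ℝ :=
  (∑ i : Fin d, (f (Function.update x i (x i + 1)) + f (Function.update x i (x i - 1))))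
    - 2 * d * f x

lemma Hform_eq_latticeLaplacian_add (d : ℕ) (β : ℝ) (f : Zd d → ℝ) (x : Zd d) :
    Hform d β f x = latticeLaplacian d f x + β * (if x = 0 then f x else 0) := rfl

lemma latticeLaplacian_const_mul (d : ℕ) (c : ℝ) (f : Zd d → ℝ) (x : Zd d) :
    latticeLaplacian d (fun y => c * f y) x = c * latticeLaplacian d f x := by
  simp only [latticeLaplacian, ← mul_add, ← Finset.mul_sum]
  ring

lemma latticeLaplacian_cosTransform {d : ℕ} {g : (Fin d → ℝ) → ℝ} (hg : IntegrableOn g (cube d))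
    (x : Zd d) :
    latticeLaplacian d (cosTransform g) x = -cosTransform (fun φ => Phi d φ * g φ) x := by
  have hint : ∀ z : Zd d, IntegrableOn (fun φ => cos (phase z φ) * g φ) (cube d) := fun z =>
    hg.bdd_mul (continuous_cos.comp (continuous_phase z)).aestronglyMeasurable
      (.of_forall fun φ => abs_cos_le_one _)
  have hpair : ∀ (i : Fin d) (φ : Fin d → ℝ),
      cos (phase (Function.update x i (x i + 1)) φ) * g φ
        + cos (phase (Function.update x i (x i - 1)) φ) * g φ
        = 2 * cos (phase x φ) * g φ * cos (φ i) := by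
    intro i φ
    simp only [phase_update, Int.cast_add, Int.cast_sub, Int.cast_one, add_sub_cancel_left,
      sub_sub_cancel_left, cos_add, cos_sub, mul_neg, mul_one, ← sub_eq_add_neg]
    ring
  have hpairInt : ∀ i : Fin d, IntegrableOn (fun φ =>
      cos (phase (Function.update x i (x i + 1)) φ) * g φ
        + cos (phase (Function.update x i (x i - 1)) φ) * g φ) (cube d) :=
    fun i => (hint _).add (hint _)
  calc latticeLaplacian d (cosTransform g) x
      = ∫ φ in cube d, ((∑ i : Fin d, 2 * cos (phase x φ) * g φ * cos (φ i))
          - 2 * d * (cos (phase x φ) * g φ)) := by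
        simp only [← hpair]
        rw [integral_sub (integrable_finsetSum _ fun i _ => hpairInt i) ((hint x).const_mul _),
          integral_finsetSum _ fun i _ => hpairInt i, integral_const_mul]
        simp only [latticeLaplacian, cosTransform, integral_add (hint _) (hint _)]
    _ = -cosTransform (fun φ => Phi d φ * g φ) x := by
        rw [cosTransform, ← integral_neg]
        congr 1
        ext φ
        rw [← Finset.mul_sum, Phi_eq_sub_sum_cos]
        ring

lemma cosTransform_Phi_mul_inv_Phi {d : ℕ} (hd : 0 < d) (x : Zd d) :
    cosTransform (fun φ => Phi d φ * (Phi d φ)⁻¹) x = if x = 0 then (2 * π) ^ d else 0 := by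
  rw [← cosTransform_one]
  refine integral_congr_ae ?_
  filter_upwards [ae_restrict_cube_Phi_pos hd] with φ hφ
  rw [mul_inv_cancel₀ hφ.ne']

lemma psiFun_critical_apply_zero {d : ℕ} (hd : 3 ≤ d) : psiFun d (Ir d 0)⁻¹ 0 0 = 1 := by
  rw [psiFun_apply_zero, inv_mul_cancel₀ (Ir_zero_pos hd).ne']

lemma Hform_psiFun_critical {d : ℕ} (hd : 3 ≤ d) (x : Zd d) :
    Hform d (Ir d 0)⁻¹ (psiFun d (Ir d 0)⁻¹ 0) x = 0 := by
  have hψ0 := psiFun_critical_apply_zero hd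
  rw [Hform_eq_latticeLaplacian_add, psiFun_eq_cosTransform, latticeLaplacian_const_mul]
  simp only [zero_add, latticeLaplacian_cosTransform (integrableOn_inv_Phi hd),
    cosTransform_Phi_mul_inv_Phi (show 0 < d by omega)]
  split_ifs with hx
  · subst hx
    simp only [psiFun_eq_cosTransform, zero_add] at hψ0
    rw [hψ0, mul_neg, mul_assoc, inv_mul_cancel₀ (by positivity)]
    ring
  · simp

lemma memℓp_two_iff_summable_sq {α : Type*} {f : α → ℝ} :
    Memℓp f 2 ↔ Summable fun i => f i ^ 2 := by
  simp [memℓp_gen_iff (p := 2) (by norm_num)]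

/-- for `d ≥ 5` and the critical `β_d = 1/I(0)`, the function
`ψ(x) = β_d (2π)^{-d} ∫ cos⟨φ,x⟩/Φ(φ) dφ` is an `ℓ²(ℤ^d)` eigenfunction of `H_{β_d}` with
eigenvalue `0`, normalized so that `ψ(0) = 1`: the critical operator has `0` as an
`ℓ²`-eigenvalue at the edge of its essential spectrum. -/
theorem critical_eigenfunction_high_dim (d : ℕ) (hd : 5 ≤ d) (βd : ℝ)
    (hβd : βd = (Ir d 0)⁻¹) :
    Memℓp (psiFun d βd 0) 2 ∧ psiFun d βd 0 0 = 1 ∧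
      ∀ x : Zd d, Hform d βd (psiFun d βd 0) x = 0 := by
  subst hβd
  refine ⟨?_, psiFun_critical_apply_zero (by omega), Hform_psiFun_critical (by omega)⟩
  rw [psiFun_eq_cosTransform]
  simp only [zero_add]
  exact (memℓp_two_iff_summable_sq.2 (summable_sq_cosTransform (memLp_inv_Phi hd))).const_mul _
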